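/- The function B ↦ s_B is continuous on the interval (1, ∞), and the right limit lim_{B→1⁺} s_B exists. -/

import Mathlib

/-!
Two elementary comparisons of the sums `f_{n,B}` drive everything. Increasing `B` decreases every
term, so `B ↦ s_{n,B}` is antitone. Replacing `B₁` by `B₂ = B₁ ^ c` with `c ≥ 1` can be absorbed by
the exponent, since `(B₁^{2n} q²)^{-cρ} ≤ (B₂^{2n} q²)^{-ρ}` when `q ≥ 1`; hence
`B ↦ log B · s_{n,B}` is monotone. Both properties pass to the limit `s_B`, and a function that is
antitone while its product with a positive continuous function is monotone cannot jump. Finally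
`q_{2n} ≥ ∏ (a_{2j} + 1)` and `∑_{a ≥ 1} (a + 1)⁻² = π²/6 - 1 ≤ 1` give `f_{n,B}(1) ≤ 1`, so
`s_B ≤ 1`, and the antitone bounded function `s_B` has a limit as `B → 1⁺`.
-/

open Filter Topology MeasureTheory

/-- The Gauss map `T(x) = 1/x mod 1`. -/
noncomputable def gaussMap (x : ℝ) : ℝ := Int.fract (1 / x)

/-- The `n`-th continued fraction partial quotient of `x`:
`a_n(x) = ⌊1 / T^{n-1}(x)⌋` for `n ≥ 1`. -/
noncomputable def cfa (n : ℕ) (x : ℝ) : ℤ := ⌊1 / (gaussMap^[n - 1] x)⌋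

/-- The set of irrational `x ∈ [0,1)` whose odd-order partial quotients all equal 1. -/
def Ieven : Set ℝ :=
  {x | x ∈ Set.Ico (0 : ℝ) 1 ∧ Irrational x ∧ ∀ k : ℕ, cfa (2 * k + 1) x = 1}

/-- Given `[a_2, a_4, …, a_{2n}]`, the denominator `q_{2n}` of
`[0; 1, a_2, 1, a_4, …, 1, a_{2n}]` (with `q_0 = q_1 = 1`,
`q_{2j} = a_{2j} q_{2j-1} + q_{2j-2}`, `q_{2j+1} = q_{2j} + q_{2j-1}`). -/
def qEven (l : List ℕ) : ℕ :=
  (l.foldl (fun p a => (p.2 + p.1, a * (p.2 + p.1) + p.2)) ((0 : ℕ), (1 : ℕ))).2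

/-- `f_{n,B}(ρ) = Σ_{a_2,…,a_{2n} ∈ 𝒜} (B^{2n} q_{2n}²)^{−ρ}`. -/
noncomputable def fnB (A : Set ℕ) (B : ℝ) (n : ℕ) (ρ : ℝ) : ENNReal :=
  ∑' v : Fin n → A,
    ENNReal.ofReal ((B ^ (2 * n) * (qEven (List.ofFn fun i => (v i : ℕ)) : ℝ) ^ 2) ^ (-ρ))

/-- `s_{n,B}(𝒜) = inf {ρ ≥ 0 : f_{n,B}(ρ) ≤ 1}`. -/
noncomputable def snB (A : Set ℕ) (B : ℝ) (n : ℕ) : ℝ :=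
  sInf {ρ : ℝ | 0 ≤ ρ ∧ fnB A B n ρ ≤ 1}

/-- `q_n(x)`: denominator of the `n`-th convergent of `x`. -/
noncomputable def qden (x : ℝ) : ℕ → ℤ
  | 0 => 1
  | 1 => cfa 1 x
  | (n + 2) => cfa (n + 2) x * qden x (n + 1) + qden x n

/-- `p_n(x)`: numerator of the `n`-th convergent of `x ∈ [0,1)`. -/
noncomputable def pnum (x : ℝ) : ℕ → ℤ
  | 0 => 0
  | 1 => 1
  | (n + 2) => cfa (n + 2) x * pnum x (n + 1) + pnum x n

open scoped ENNReal

theorem AntitoneOn.continuousOn_of_monotoneOn_mul {α : Type*} [TopologicalSpace α]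
    [LinearOrder α] {S : Set α} {f φ : α → ℝ} (hf : AntitoneOn f S)
    (hφf : MonotoneOn (fun x => φ x * f x) S) (hφ : ContinuousOn φ S)
    (hφ_pos : ∀ x ∈ S, 0 < φ x) : ContinuousOn f S := by
  intro x hx
  set g : α → ℝ := fun y => φ x * f x / φ y
  have hg : Tendsto g (𝓝[S] x) (𝓝 (f x)) := by
    have : Tendsto g (𝓝[S] x) (𝓝 (φ x * f x / φ x)) :=
      tendsto_const_nhds.div (hφ x hx) (hφ_pos x hx).ne'
    rwa [mul_div_cancel_left₀ _ (hφ_pos x hx).ne'] at this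
  have hbounds : ∀ y ∈ S, min (f x) (g y) ≤ f y ∧ f y ≤ max (f x) (g y) := by
    intro y hy
    rcases le_total y x with hyx | hxy
    · have hfy : f y ≤ g y := (le_div_iff₀ (hφ_pos y hy)).2 (by linarith [hφf hy hx hyx])
      exact ⟨(min_le_left _ _).trans (hf hy hx hyx), hfy.trans (le_max_right _ _)⟩
    · have hgy : g y ≤ f y := (div_le_iff₀ (hφ_pos y hy)).2 (by linarith [hφf hx hy hxy])
      exact ⟨(min_le_right _ _).trans hgy, (hf hx hy hxy).trans (le_max_left _ _)⟩
  refine tendsto_of_tendsto_of_tendsto_of_le_of_le' (g := fun y => min (f x) (g y))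
    (h := fun y => max (f x) (g y)) ?_ ?_ ?_ ?_
  · simpa using (tendsto_const_nhds (x := f x)).min hg
  · simpa using (tendsto_const_nhds (x := f x)).max hg
  · exact eventually_nhdsWithin_of_forall fun y hy => (hbounds y hy).1
  · exact eventually_nhdsWithin_of_forall fun y hy => (hbounds y hy).2

theorem ENNReal.tsum_pi_fin_prod_eq_pow {α : Type*} (w : α → ℝ≥0∞) (n : ℕ) :
    ∑' v : Fin n → α, ∏ i, w (v i) = (∑' a, w a) ^ n := by
  induction n with
  | zero => simp
  | succ n ih =>
    rw [← (Fin.consEquiv fun _ => α).tsum_eq]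
    simp only [Fin.consEquiv, Equiv.coe_fn_mk, Fin.prod_univ_succ, Fin.cons_zero, Fin.cons_succ]
    rw [ENNReal.tsum_prod (f := fun (a : α) (u : Fin n → α) => w a * ∏ i, w (u i))]
    simp only [ENNReal.tsum_mul_left, ENNReal.tsum_mul_right, ih, pow_succ']

theorem tsum_ofReal_inv_add_one_sq_le_one {A : Set ℕ} (hA : 0 ∉ A) :
    ∑' a : A, ENNReal.ofReal ((((a : ℕ) : ℝ) + 1) ^ 2)⁻¹ ≤ 1 := by
  set g : ℕ → ℝ := fun m => ((((m + 1 : ℕ) : ℝ) + 1) ^ 2)⁻¹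
  have hg : HasSum g (Real.pi ^ 2 / 6 - 1) := by
    have hζ := (hasSum_nat_add_iff' 2).2 hasSum_zeta_two
    rw [show ∑ i ∈ Finset.range 2, (1 : ℝ) / (i : ℝ) ^ 2 = 1 by norm_num [Finset.sum_range_succ]]
      at hζ
    have hg_eq : g = fun m : ℕ => (1 : ℝ) / ((m + 2 : ℕ) : ℝ) ^ 2 := by
      funext m
      simp only [g]
      push_cast
      ring
    rw [hg_eq]
    exact hζ
  have hpos (a : A) : 0 < (a : ℕ) := Nat.pos_of_ne_zero fun h => hA (h ▸ a.2)
  have hshift (a : A) : g ((a : ℕ) - 1) = ((((a : ℕ) : ℝ) + 1) ^ 2)⁻¹ := by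
    simp only [g, Nat.sub_add_cancel (hpos a)]
  have hinj : Function.Injective fun a : A => (a : ℕ) - 1 := fun a b hab =>
    Subtype.ext (by have := hpos a; have := hpos b; simp only at hab; omega)
  calc ∑' a : A, ENNReal.ofReal ((((a : ℕ) : ℝ) + 1) ^ 2)⁻¹
      = ∑' a : A, ENNReal.ofReal (g ((a : ℕ) - 1)) := by simp only [hshift]
    _ ≤ ∑' m, ENNReal.ofReal (g m) :=
      ENNReal.tsum_comp_le_tsum_of_injective hinj fun m => ENNReal.ofReal (g m)
    _ = ENNReal.ofReal (Real.pi ^ 2 / 6 - 1) := by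
      rw [← ENNReal.ofReal_tsum_of_nonneg (fun m => by positivity) hg.summable, hg.tsum_eq]
    _ ≤ 1 := ENNReal.ofReal_le_one.2 (by nlinarith [Real.pi_lt_d2, Real.pi_pos])

theorem mul_prod_le_foldl_qEven (l : List ℕ) (p : ℕ × ℕ) :
    p.2 * (l.map (· + 1)).prod ≤ (l.foldl (fun p a => (p.2 + p.1, a * (p.2 + p.1) + p.2)) p).2 := by
  induction l generalizing p with
  | nil => simp
  | cons a t ih =>
    refine le_trans ?_ (ih _)
    rw [List.map_cons, List.prod_cons, ← mul_assoc]
    exact Nat.mul_le_mul_right _ (by nlinarith)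

theorem prod_add_one_le_qEven {n : ℕ} (v : Fin n → ℕ) : ∏ i, (v i + 1) ≤ qEven (List.ofFn v) := by
  simpa [qEven, List.map_ofFn, List.prod_ofFn] using mul_prod_le_foldl_qEven (List.ofFn v) (0, 1)

theorem one_le_qEven {n : ℕ} (v : Fin n → ℕ) : 1 ≤ qEven (List.ofFn v) :=
  (Finset.one_le_prod' fun i _ => Nat.le_add_left 1 (v i)).trans (prod_add_one_le_qEven v)

theorem rpow_neg_pow_mul_le_of_le_base {B₁ B₂ Q ρ : ℝ} (k : ℕ) (hB₁ : 0 < B₁) (hB : B₁ ≤ B₂)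
    (hQ : 0 < Q) (hρ : 0 ≤ ρ) : (B₂ ^ k * Q) ^ (-ρ) ≤ (B₁ ^ k * Q) ^ (-ρ) :=
  Real.rpow_le_rpow_of_nonpos (by positivity)
    (mul_le_mul_of_nonneg_right (pow_le_pow_left₀ hB₁.le hB k) hQ.le) (neg_nonpos.2 hρ)

theorem rpow_neg_pow_mul_log_div_log_le {B₁ B₂ Q ρ : ℝ} (k : ℕ) (hB₁ : 1 < B₁) (hB : B₁ ≤ B₂)
    (hQ : 1 ≤ Q) (hρ : 0 ≤ ρ) :
    (B₁ ^ k * Q) ^ (-(Real.log B₂ / Real.log B₁ * ρ)) ≤ (B₂ ^ k * Q) ^ (-ρ) := by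
  have hB₁0 : 0 < B₁ := by linarith
  have hB₂0 : 0 < B₂ := by linarith
  have hQ0 : 0 < Q := by linarith
  have hlog₁ : 0 < Real.log B₁ := Real.log_pos hB₁
  have hlogQ : 0 ≤ Real.log Q := Real.log_nonneg hQ
  have hc : 1 ≤ Real.log B₂ / Real.log B₁ := (one_le_div hlog₁).2 (Real.log_le_log hB₁0 hB)
  set c := Real.log B₂ / Real.log B₁
  have hcB : c * Real.log B₁ = Real.log B₂ := div_mul_cancel₀ _ hlog₁.ne'
  rw [Real.rpow_def_of_pos (mul_pos (pow_pos hB₁0 k) hQ0),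
    Real.rpow_def_of_pos (mul_pos (pow_pos hB₂0 k) hQ0), Real.exp_le_exp,
    Real.log_mul (pow_pos hB₁0 k).ne' hQ0.ne', Real.log_mul (pow_pos hB₂0 k).ne' hQ0.ne',
    Real.log_pow, Real.log_pow, ← sub_nonneg]
  have hdiff : (k * Real.log B₂ + Real.log Q) * -ρ - (k * Real.log B₁ + Real.log Q) * -(c * ρ)
      = (c - 1) * ρ * Real.log Q := by
    rw [← hcB]; ring
  rw [hdiff]
  exact mul_nonneg (mul_nonneg (sub_nonneg.2 hc) hρ) hlogQ

section CriticalExponent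

variable {A : Set ℕ} {B B₁ B₂ : ℝ} {n : ℕ}

theorem fnB_le_of_le_base (hB₁ : 0 < B₁) (hB : B₁ ≤ B₂) {ρ : ℝ} (hρ : 0 ≤ ρ) :
    fnB A B₂ n ρ ≤ fnB A B₁ n ρ :=
  ENNReal.tsum_le_tsum fun v => ENNReal.ofReal_le_ofReal <|
    rpow_neg_pow_mul_le_of_le_base _ hB₁ hB
      (by have := one_le_qEven fun i => (v i : ℕ); positivity) hρ

theorem fnB_log_div_log_mul_le (hB₁ : 1 < B₁) (hB : B₁ ≤ B₂) {ρ : ℝ} (hρ : 0 ≤ ρ) :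
    fnB A B₁ n (Real.log B₂ / Real.log B₁ * ρ) ≤ fnB A B₂ n ρ :=
  ENNReal.tsum_le_tsum fun v => ENNReal.ofReal_le_ofReal <|
    rpow_neg_pow_mul_log_div_log_le _ hB₁ hB
      (one_le_pow₀ (by exact_mod_cast one_le_qEven fun i => (v i : ℕ))) hρ

theorem fnB_one_le_one (hA : 0 ∉ A) (hB : 1 ≤ B) : fnB A B n 1 ≤ 1 := by
  set w : A → ℝ≥0∞ := fun a => ENNReal.ofReal ((((a : ℕ) : ℝ) + 1) ^ 2)⁻¹
  have hterm (v : Fin n → A) :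
      ENNReal.ofReal ((B ^ (2 * n) * (qEven (List.ofFn fun i => (v i : ℕ)) : ℝ) ^ 2) ^ (-1 : ℝ))
        ≤ ∏ i, w (v i) := by
    have hprod : ∏ i, (((v i : ℕ) : ℝ) + 1) ≤ qEven (List.ofFn fun i => (v i : ℕ)) := by
      exact_mod_cast prod_add_one_le_qEven fun i => (v i : ℕ)
    set q : ℝ := (qEven (List.ofFn fun i => (v i : ℕ)) : ℝ)
    have hprod_pos : 0 < ∏ i, (((v i : ℕ) : ℝ) + 1) := by positivity
    rw [← ENNReal.ofReal_prod_of_nonneg fun i _ => by positivity, Finset.prod_inv_distrib,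
      Finset.prod_pow, Real.rpow_neg_one]
    refine ENNReal.ofReal_le_ofReal (inv_anti₀ (by positivity) ?_)
    calc (∏ i, (((v i : ℕ) : ℝ) + 1)) ^ 2 ≤ q ^ 2 := pow_le_pow_left₀ hprod_pos.le hprod 2
      _ ≤ B ^ (2 * n) * q ^ 2 := le_mul_of_one_le_left (by positivity) (one_le_pow₀ hB)
  calc fnB A B n 1 ≤ ∑' v : Fin n → A, ∏ i, w (v i) := ENNReal.tsum_le_tsum hterm
    _ = (∑' a, w a) ^ n := ENNReal.tsum_pi_fin_prod_eq_pow w n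
    _ ≤ 1 := pow_le_one₀ (by simp) (tsum_ofReal_inv_add_one_sq_le_one hA)

theorem snB_le {ρ : ℝ} (hρ : 0 ≤ ρ) (h : fnB A B n ρ ≤ 1) : snB A B n ≤ ρ :=
  csInf_le ⟨0, fun _ hx => hx.1⟩ ⟨hρ, h⟩

theorem snB_le_one (hA : 0 ∉ A) (hB : 1 ≤ B) : snB A B n ≤ 1 :=
  snB_le zero_le_one (fnB_one_le_one hA hB)

theorem snB_le_of_le_base (hA : 0 ∉ A) (hB₁ : 1 ≤ B₁) (hB : B₁ ≤ B₂) :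
    snB A B₂ n ≤ snB A B₁ n :=
  le_csInf ⟨1, zero_le_one, fnB_one_le_one hA hB₁⟩ fun _ hρ =>
    snB_le hρ.1 ((fnB_le_of_le_base (by linarith) hB hρ.1).trans hρ.2)

theorem log_mul_snB_le_of_le_base (hA : 0 ∉ A) (hB₁ : 1 < B₁) (hB : B₁ ≤ B₂) :
    Real.log B₁ * snB A B₁ n ≤ Real.log B₂ * snB A B₂ n := by
  have hlog₁ : 0 < Real.log B₁ := Real.log_pos hB₁
  have hc : 0 < Real.log B₂ / Real.log B₁ := div_pos (Real.log_pos (by linarith)) hlog₁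
  have hscaled : snB A B₁ n / (Real.log B₂ / Real.log B₁) ≤ snB A B₂ n :=
    le_csInf ⟨1, zero_le_one, fnB_one_le_one hA (by linarith)⟩ fun ρ hρ =>
      (div_le_iff₀' hc).2 <| snB_le (mul_nonneg hc.le hρ.1)
        ((fnB_log_div_log_mul_le hB₁ hB hρ.1).trans hρ.2)
  rw [div_le_iff₀' hc] at hscaled
  calc Real.log B₁ * snB A B₁ n
      ≤ Real.log B₁ * (Real.log B₂ / Real.log B₁ * snB A B₂ n) :=
        mul_le_mul_of_nonneg_left hscaled hlog₁.le
    _ = Real.log B₂ * snB A B₂ n := by field_simp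

end CriticalExponent

/-- Proposition 2.7, second part: `B ↦ s_B` is continuous on `(1, ∞)` and its right
limit at `B = 1` exists. -/
theorem sB_continuous_and_right_limit (sB : ℝ → ℝ)
    (hsB : ∀ B : ℝ, 1 < B →
      Tendsto (fun n => snB {m : ℕ | 1 ≤ m} B n) atTop (nhds (sB B))) :
    ContinuousOn sB (Set.Ioi 1) ∧
      ∃ l : ℝ, Tendsto sB (nhdsWithin 1 (Set.Ioi 1)) (nhds l) := by
  have hA : 0 ∉ {m : ℕ | 1 ≤ m} := by simp
  have hanti : AntitoneOn sB (Set.Ioi 1) := fun B₁ hB₁ B₂ hB₂ hB =>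
    le_of_tendsto_of_tendsto' (hsB B₂ hB₂) (hsB B₁ hB₁) fun _ =>
      snB_le_of_le_base hA (le_of_lt hB₁) hB
  have hmono : MonotoneOn (fun B => Real.log B * sB B) (Set.Ioi 1) := fun B₁ hB₁ B₂ hB₂ hB =>
    le_of_tendsto_of_tendsto' ((hsB B₁ hB₁).const_mul _) ((hsB B₂ hB₂).const_mul _) fun _ =>
      log_mul_snB_le_of_le_base hA hB₁ hB
  have hbdd : BddAbove (sB '' Set.Ioi 1) := by
    refine ⟨1, ?_⟩
    rintro _ ⟨B, hB, rfl⟩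
    exact le_of_tendsto' (hsB B hB) fun _ => snB_le_one hA (le_of_lt hB)
  have hlog : ContinuousOn Real.log (Set.Ioi 1) :=
    Real.continuousOn_log.mono fun B (hB : 1 < B) => (zero_lt_one.trans hB).ne'
  exact ⟨hanti.continuousOn_of_monotoneOn_mul hmono hlog fun B hB => Real.log_pos hB,
    _, hanti.tendsto_nhdsGT hbdd⟩
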